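/- Let m and N be positive integers, let a ∈ ℚ with 0 < a < 1, let b ∈ ℝ and τ ∈ ℍ, and set Y := e^{2πi(aNτ + b)}. Then Σ_{k∈ℤ} Y^{2km} q^{Nmk²} (Y q^{Nk} + 1)/(Y q^{Nk} − 1) = − 2 q^{−Nma²} · [ Σ_{(n₁,n₂)∈ℤ², n₁≥0, n₂≥0} e^{2πi(2mn₁+n₂)b} q^{N( m(n₁+a)² + (n₁+a)n₂ )} − Σ_{(n₁,n₂)∈ℤ², n₁<0, n₂<0} e^{2πi(2mn₁+n₂)b} q^{N( m(n₁+a)² + (n₁+a)n₂ )} ] + q^{−Nma²} · Σ_{n∈ℤ} e^{4πi m n b} q^{N m (n+a)²}, and all series converge absolutely. (This is the paper's Corollary expressing μ_{m,0}(aNτ+b, Nτ) through the cone vertex algebra trace function: the bracketed cone sum equals η(τ)²·T^{(N)}_{(a,0),(b,0)}(τ) for the rank-2 lattice with Gram matrix N·[[2m,1],[1,0]], and the last term is the boundary theta-series correction.) -/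

import Mathlib

/-!
For `‖w‖ < 1` one has `(w + 1) / (w - 1) = 1 - 2 ∑_{n ≥ 0} wⁿ`, and for `‖w‖ > 1`
`(w + 1) / (w - 1) = 1 + 2 ∑_{n < 0} wⁿ`. For the `k`-th Appell–Lerch term take
`w = Y q^{Nk} = e^{2πib} q^{N(k+a)}`; since `0 < a < 1`, `‖w‖ < 1` exactly when `k ≥ 0`. Hence the
`k`-th term is `q^{-Nma²} θ_k` (a term of the boundary theta series) plus `-2` times the row `k`
of the cone sum over `{n₁ ≥ 0, n₂ ≥ 0} ∪ {n₁ < 0, n₂ < 0}`, weighted by the sign of the cone.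
On the cone the terms are dominated by `‖θ_k‖ r^{|n₂|}` with `r < 1`, so the double series
converges absolutely and may be summed row by row.
-/

open Complex Real

/-- `qp τ c` is `q^c = e^{2πicτ}`. -/
noncomputable def qp (τ : ℂ) (c : ℝ) : ℂ := Complex.exp (2 * Real.pi * Complex.I * c * τ)

/-- `ph x = e^{2πix}` for real `x`. -/
noncomputable def ph (x : ℝ) : ℂ := Complex.exp (2 * Real.pi * Complex.I * x)

lemma norm_qp (τ : ℂ) (c : ℝ) : ‖qp τ c‖ = Real.exp (-(2 * π * c * τ.im)) := by
  rw [qp, Complex.norm_exp]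
  simp [Complex.mul_re]

lemma norm_ph (x : ℝ) : ‖ph x‖ = 1 := by
  rw [ph, Complex.norm_exp]
  simp [Complex.mul_re]

lemma summable_pow_natAbs {r : ℝ} (hr₀ : 0 ≤ r) (hr : r < 1) :
    Summable fun n : ℤ => r ^ n.natAbs :=
  .of_nat_of_neg (by simpa using summable_geometric_of_lt_one hr₀ hr)
    (by simpa using summable_geometric_of_lt_one hr₀ hr)

/-- The sign `(sgn k + sgn n) / 2` (with `sgn 0 = 1`) of the cone
`{k ≥ 0, n ≥ 0} ∪ {k < 0, n < 0}`. -/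
def coneSign (k n : ℤ) : ℤ :=
  if 0 ≤ k ∧ 0 ≤ n then 1 else if k < 0 ∧ n < 0 then -1 else 0

section coneSign

variable {K : Type*} [NormedField K]

lemma coneSign_mul (k n : ℤ) (x : K) :
    (coneSign k n : K) * x =
      (if 0 ≤ k ∧ 0 ≤ n then x else 0) - (if k < 0 ∧ n < 0 then x else 0) := by
  unfold coneSign
  split_ifs <;> first | omega | simp

lemma ite_pos_cone_norm_le (k n : ℤ) (x : K) :
    (if 0 ≤ k ∧ 0 ≤ n then ‖x‖ else 0) ≤ ‖(coneSign k n : K) * x‖ := by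
  unfold coneSign
  split_ifs <;> simp

lemma ite_neg_cone_norm_le (k n : ℤ) (x : K) :
    (if k < 0 ∧ n < 0 then ‖x‖ else 0) ≤ ‖(coneSign k n : K) * x‖ := by
  unfold coneSign
  split_ifs <;> first | omega | simp

theorem hasSum_coneSign_mul_zpow {k : ℤ} {w : K} (hpos : 0 ≤ k → ‖w‖ < 1)
    (hneg : k < 0 → 1 < ‖w‖) :
    HasSum (fun n : ℤ => (coneSign k n : K) * w ^ n) (1 - w)⁻¹ := by
  set f : ℤ → K := fun n => (coneSign k n : K) * w ^ n
  rcases le_or_gt 0 k with hk | hk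
  · have hnat : HasSum (fun n : ℕ => f n) (1 - w)⁻¹ :=
      (hasSum_geometric_of_norm_lt_one (hpos hk)).congr_fun fun n => by simp [f, coneSign, hk]
    have htail : HasSum (fun n : ℕ => f (-(n + 1))) 0 :=
      hasSum_zero.congr_fun fun n => by simp [f, coneSign, not_lt.mpr hk]; omega
    simpa using hnat.of_nat_of_neg_add_one htail
  · have hw : 1 < ‖w‖ := hneg hk
    have hw0 : w ≠ 0 := norm_pos_iff.mp (one_pos.trans hw)
    have hw1 : w ≠ 1 := by rintro rfl; simp at hw
    have hnat : HasSum (fun n : ℕ => f n) 0 :=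
      hasSum_zero.congr_fun fun n => by simp [f, coneSign, not_le.mpr hk]
    have htail : HasSum (fun n : ℕ => f (-(n + 1))) (-w⁻¹ * (1 - w⁻¹)⁻¹) := by
      refine ((hasSum_geometric_of_norm_lt_one (by rwa [norm_inv, inv_lt_one₀ (one_pos.trans hw)])
        ).mul_left (-w⁻¹)).congr_fun fun n => ?_
      have hsign : coneSign k (-(n + 1)) = -1 := by simp [coneSign, hk]; omega
      simp only [f]
      rw [hsign, show -((n : ℤ) + 1) = -((n + 1 : ℕ) : ℤ) by push_cast; ring, zpow_neg,
        zpow_natCast, ← inv_pow, pow_succ]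
      push_cast
      ring
    convert hnat.of_nat_of_neg_add_one htail using 1
    field_simp [sub_ne_zero.mpr hw1, sub_ne_zero.mpr hw1.symm]
    ring

lemma norm_coneSign_mul_zpow_le {k : ℤ} {x : K} {r : ℝ} (hr : 0 < r) (hpos : 0 ≤ k → ‖x‖ ≤ r)
    (hneg : k < 0 → r⁻¹ ≤ ‖x‖) (n : ℤ) :
    ‖(coneSign k n : K) * x ^ n‖ ≤ r ^ n.natAbs := by
  unfold coneSign
  split_ifs with hcone hcone'
  · obtain ⟨j, rfl⟩ := Int.eq_ofNat_of_zero_le hcone.2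
    simpa using pow_le_pow_left₀ (norm_nonneg x) (hpos hcone.1) j
  · obtain ⟨j, hj⟩ := Int.exists_eq_neg_ofNat hcone'.2.le
    subst hj
    simpa using pow_le_pow_left₀ (by positivity) (inv_le_of_inv_le₀ hr (hneg hcone'.1)) j
  · simp only [Int.cast_zero, zero_mul, norm_zero]
    positivity

lemma summable_ite_pos_cone_norm {f : ℤ × ℤ → K}
    (hf : Summable fun p : ℤ × ℤ => ‖(coneSign p.1 p.2 : K) * f p‖) :
    Summable fun p : ℤ × ℤ => if 0 ≤ p.1 ∧ 0 ≤ p.2 then ‖f p‖ else 0 :=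
  hf.of_nonneg_of_le (fun _ => by positivity) fun p => ite_pos_cone_norm_le p.1 p.2 (f p)

lemma summable_ite_neg_cone_norm {f : ℤ × ℤ → K}
    (hf : Summable fun p : ℤ × ℤ => ‖(coneSign p.1 p.2 : K) * f p‖) :
    Summable fun p : ℤ × ℤ => if p.1 < 0 ∧ p.2 < 0 then ‖f p‖ else 0 :=
  hf.of_nonneg_of_le (fun _ => by positivity) fun p => ite_neg_cone_norm_le p.1 p.2 (f p)

lemma tsum_coneSign_mul [CompleteSpace K] {f : ℤ × ℤ → K}
    (hf : Summable fun p : ℤ × ℤ => ‖(coneSign p.1 p.2 : K) * f p‖) :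
    ∑' p : ℤ × ℤ, (coneSign p.1 p.2 : K) * f p =
      (∑' p : ℤ × ℤ, if 0 ≤ p.1 ∧ 0 ≤ p.2 then f p else 0) -
        ∑' p : ℤ × ℤ, if p.1 < 0 ∧ p.2 < 0 then f p else 0 := by
  have hpos : Summable fun p : ℤ × ℤ => if 0 ≤ p.1 ∧ 0 ≤ p.2 then f p else 0 :=
    .of_norm_bounded (summable_ite_pos_cone_norm hf) fun p => by split_ifs <;> simp
  have hneg : Summable fun p : ℤ × ℤ => if p.1 < 0 ∧ p.2 < 0 then f p else 0 :=
    .of_norm_bounded (summable_ite_neg_cone_norm hf) fun p => by split_ifs <;> simp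
  simp only [coneSign_mul]
  exact hpos.tsum_sub hneg

variable {θ w : ℤ → K} {r : ℝ}

theorem summable_norm_coneSign_mul_zpow (hθ : Summable fun k => ‖θ k‖) (hr₀ : 0 < r)
    (hr : r < 1) (hpos : ∀ k, 0 ≤ k → ‖w k‖ ≤ r) (hneg : ∀ k < 0, r⁻¹ ≤ ‖w k‖) :
    Summable fun p : ℤ × ℤ => ‖(coneSign p.1 p.2 : K) * (θ p.1 * w p.1 ^ p.2)‖ := by
  refine .of_nonneg_of_le (fun _ => norm_nonneg _) (fun p => ?_)
    (hθ.mul_of_nonneg (summable_pow_natAbs hr₀.le hr) (fun _ => norm_nonneg _)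
      (fun _ => by positivity))
  rw [mul_left_comm, norm_mul]
  exact mul_le_mul_of_nonneg_left
    (norm_coneSign_mul_zpow_le hr₀ (hpos p.1) (hneg p.1) p.2) (norm_nonneg _)

theorem hasSum_mul_lerch_ratio [CompleteSpace K] (hθ : Summable fun k => ‖θ k‖) (hr₀ : 0 < r)
    (hr : r < 1) (hpos : ∀ k, 0 ≤ k → ‖w k‖ ≤ r) (hneg : ∀ k < 0, r⁻¹ ≤ ‖w k‖) :
    HasSum (fun k => θ k * ((w k + 1) / (w k - 1)))
      (∑' k, θ k - 2 * ((∑' p : ℤ × ℤ, if 0 ≤ p.1 ∧ 0 ≤ p.2 then θ p.1 * w p.1 ^ p.2 else 0) -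
        ∑' p : ℤ × ℤ, if p.1 < 0 ∧ p.2 < 0 then θ p.1 * w p.1 ^ p.2 else 0)) := by
  have hS := summable_norm_coneSign_mul_zpow hθ hr₀ hr hpos hneg
  have hlt : ∀ k, 0 ≤ k → ‖w k‖ < 1 := fun k hk => (hpos k hk).trans_lt hr
  have hgt : ∀ k < 0, 1 < ‖w k‖ := fun k hk => ((one_lt_inv₀ hr₀).mpr hr).trans_le (hneg k hk)
  have hrow (k : ℤ) :
      HasSum (fun n => (coneSign k n : K) * (θ k * w k ^ n)) (θ k * (1 - w k)⁻¹) :=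
    ((hasSum_coneSign_mul_zpow (hlt k) (hgt k)).mul_left (θ k)).congr_fun fun n => by ring
  rw [← tsum_coneSign_mul hS]
  refine (hθ.of_norm.hasSum.sub ((hS.of_norm.hasSum.prod_fiberwise hrow).mul_left 2)).congr_fun
    fun k => ?_
  have hw1 : w k - 1 ≠ 0 := by
    refine sub_ne_zero.mpr fun h => ?_
    rcases le_or_gt 0 k with hk | hk
    · simpa [h] using hlt k hk
    · simpa [h] using hgt k hk
  field_simp [hw1, sub_ne_zero.mpr (Ne.symm (sub_ne_zero.mp hw1))]
  ring

end coneSign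

section AppellLerch

variable (m N : ℕ) (A b : ℝ) (τ : ℂ)

noncomputable def thetaTerm (k : ℤ) : ℂ :=
  ph (2 * m * k * b) * qp τ (N * m * (k + A) ^ 2)

noncomputable def lerchVar (k : ℤ) : ℂ :=
  ph b * qp τ (N * (k + A))

lemma thetaTerm_mul_lerchVar_zpow (k n : ℤ) :
    thetaTerm m N A b τ k * lerchVar N A b τ k ^ n =
      ph ((2 * m * k + n) * b) * qp τ (N * (m * (k + A) ^ 2 + (k + A) * n)) := by
  simp only [thetaTerm, lerchVar, ph, qp, ← Complex.exp_add, ← Complex.exp_int_mul]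
  congr 1
  push_cast
  ring

lemma appellLerch_term_eq {Y : ℂ} (hY : Y = Complex.exp (2 * π * I * (A * N * τ + b))) (k : ℤ) :
    Y ^ (2 * k * (m : ℤ)) * qp τ (N * m * k ^ 2) *
        ((Y * qp τ (N * k) + 1) / (Y * qp τ (N * k) - 1)) =
      qp τ (-(N * m * A ^ 2)) *
        (thetaTerm m N A b τ k * ((lerchVar N A b τ k + 1) / (lerchVar N A b τ k - 1))) := by
  have hT : Y ^ (2 * k * (m : ℤ)) * qp τ (N * m * k ^ 2) =
      qp τ (-(N * m * A ^ 2)) * thetaTerm m N A b τ k := by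
    simp only [hY, thetaTerm, ph, qp, ← Complex.exp_add, ← Complex.exp_int_mul]
    congr 1
    push_cast
    ring
  have hw : Y * qp τ (N * k) = lerchVar N A b τ k := by
    simp only [hY, lerchVar, ph, qp, ← Complex.exp_add]
    congr 1
    push_cast
    ring
  rw [hT, hw, mul_assoc]

lemma norm_thetaTerm (k : ℤ) :
    ‖thetaTerm m N A b τ k‖ = Real.exp (-(2 * π * (N * m * A ^ 2) * τ.im)) *
      ‖jacobiTheta₂_term k (2 * N * m * A * τ) (2 * N * m * τ)‖ := by
  rw [thetaTerm, norm_mul, norm_ph, one_mul, norm_qp, norm_jacobiTheta₂_term, ← Real.exp_add]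
  congr 1
  simp [Complex.mul_re, Complex.mul_im]
  ring

variable {m N A τ}

lemma summable_norm_thetaTerm (hm : 0 < m) (hN : 0 < N) (hτ : 0 < τ.im) :
    Summable fun k => ‖thetaTerm m N A b τ k‖ := by
  have hτ' : 0 < (2 * N * m * τ : ℂ).im := by
    simpa using mul_pos (by positivity : (0 : ℝ) < 2 * N * m) hτ
  simp only [norm_thetaTerm]
  exact (summable_norm_iff.mpr ((summable_jacobiTheta₂_term_iff _ _).mpr hτ')).mul_left _

lemma norm_lerchVar (k : ℤ) :
    ‖lerchVar N A b τ k‖ = Real.exp (-(2 * π * N * τ.im * (k + A))) := by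
  rw [lerchVar, norm_mul, norm_ph, one_mul, norm_qp]
  ring_nf

lemma exists_norm_lerchVar_bounds (hN : 0 < N) (hA₀ : 0 < A) (hA₁ : A < 1) (hτ : 0 < τ.im) :
    ∃ r : ℝ, 0 < r ∧ r < 1 ∧ (∀ k, 0 ≤ k → ‖lerchVar N A b τ k‖ ≤ r) ∧
      ∀ k < 0, r⁻¹ ≤ ‖lerchVar N A b τ k‖ := by
  set c := 2 * π * N * τ.im
  have hc : 0 < c := by positivity
  have hδ : 0 < min A (1 - A) := lt_min hA₀ (by linarith)
  refine ⟨Real.exp (-(c * min A (1 - A))), Real.exp_pos _,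
    Real.exp_lt_one_iff.mpr (by nlinarith), fun k hk => ?_, fun k hk => ?_⟩
  · have hk' : (0 : ℝ) ≤ k := by exact_mod_cast hk
    rw [norm_lerchVar, Real.exp_le_exp]
    nlinarith [min_le_left A (1 - A)]
  · have hk' : (k : ℝ) ≤ -1 := by exact_mod_cast Int.le_sub_one_of_lt hk
    rw [norm_lerchVar, ← Real.exp_neg, Real.exp_le_exp]
    nlinarith [min_le_right A (1 - A)]

end AppellLerch

/-- The paper's Corollary expressing `μ_{m,0}(aNτ+b, Nτ)` via the cone vertex algebra trace
function for the rank-2 lattice with Gram matrix `N·[[2m,1],[1,0]]`, for `0 < a < 1`: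
the bracketed cone sum is `η(τ)²·T^{(N)}_{(a,0),(b,0)}(τ)` and the last term is the
boundary theta-series correction. -/
theorem specialized_appell_lerch_cone_trace
    (m N : ℕ) (hm : 0 < m) (hN : 0 < N) (a : ℚ) (ha0 : 0 < a) (ha1 : a < 1)
    (b : ℝ) (τ : ℂ) (hτ : 0 < τ.im)
    (Y : ℂ) (hY : Y = Complex.exp (2 * Real.pi * Complex.I * ((a : ℂ) * N * τ + b))) :
    Summable (fun k : ℤ =>
      ‖Y ^ (2 * k * (m : ℤ)) * qp τ ((N : ℝ) * (m : ℝ) * (k : ℝ) ^ 2) *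
        ((Y * qp τ ((N : ℝ) * (k : ℝ)) + 1) / (Y * qp τ ((N : ℝ) * (k : ℝ)) - 1))‖) ∧
    Summable (fun n : ℤ × ℤ => if 0 ≤ n.1 ∧ 0 ≤ n.2 then
      ‖ph ((2 * (m : ℝ) * (n.1 : ℝ) + (n.2 : ℝ)) * b) *
        qp τ ((N : ℝ) * ((m : ℝ) * ((n.1 : ℝ) + (a : ℝ)) ^ 2 +
          ((n.1 : ℝ) + (a : ℝ)) * (n.2 : ℝ)))‖ else 0) ∧
    Summable (fun n : ℤ × ℤ => if n.1 < 0 ∧ n.2 < 0 then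
      ‖ph ((2 * (m : ℝ) * (n.1 : ℝ) + (n.2 : ℝ)) * b) *
        qp τ ((N : ℝ) * ((m : ℝ) * ((n.1 : ℝ) + (a : ℝ)) ^ 2 +
          ((n.1 : ℝ) + (a : ℝ)) * (n.2 : ℝ)))‖ else 0) ∧
    Summable (fun n : ℤ =>
      ‖ph (2 * (m : ℝ) * (n : ℝ) * b) *
        qp τ ((N : ℝ) * (m : ℝ) * ((n : ℝ) + (a : ℝ)) ^ 2)‖) ∧
    (∑' k : ℤ, Y ^ (2 * k * (m : ℤ)) * qp τ ((N : ℝ) * (m : ℝ) * (k : ℝ) ^ 2) *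
        ((Y * qp τ ((N : ℝ) * (k : ℝ)) + 1) / (Y * qp τ ((N : ℝ) * (k : ℝ)) - 1))) =
      -2 * qp τ (-((N : ℝ) * (m : ℝ) * (a : ℝ) ^ 2)) *
        ((∑' n : ℤ × ℤ, if 0 ≤ n.1 ∧ 0 ≤ n.2 then
            ph ((2 * (m : ℝ) * (n.1 : ℝ) + (n.2 : ℝ)) * b) *
              qp τ ((N : ℝ) * ((m : ℝ) * ((n.1 : ℝ) + (a : ℝ)) ^ 2 +
                ((n.1 : ℝ) + (a : ℝ)) * (n.2 : ℝ))) else 0) -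
         (∑' n : ℤ × ℤ, if n.1 < 0 ∧ n.2 < 0 then
            ph ((2 * (m : ℝ) * (n.1 : ℝ) + (n.2 : ℝ)) * b) *
              qp τ ((N : ℝ) * ((m : ℝ) * ((n.1 : ℝ) + (a : ℝ)) ^ 2 +
                ((n.1 : ℝ) + (a : ℝ)) * (n.2 : ℝ))) else 0)) +
      qp τ (-((N : ℝ) * (m : ℝ) * (a : ℝ) ^ 2)) *
        (∑' n : ℤ, ph (2 * (m : ℝ) * (n : ℝ) * b) *
          qp τ ((N : ℝ) * (m : ℝ) * ((n : ℝ) + (a : ℝ)) ^ 2)) := by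
  have hA₀ : (0 : ℝ) < a := by exact_mod_cast ha0
  have hA₁ : (a : ℝ) < 1 := by exact_mod_cast ha1
  have hY' : Y = Complex.exp (2 * π * I * (((a : ℝ) : ℂ) * N * τ + b)) := by
    rw [hY, Complex.ofReal_ratCast]
  obtain ⟨r, hr₀, hr, hpos, hneg⟩ := exists_norm_lerchVar_bounds (b := b) hN hA₀ hA₁ hτ
  have hθ := summable_norm_thetaTerm (A := a) b hm hN hτ
  have hS := summable_norm_coneSign_mul_zpow hθ hr₀ hr hpos hneg
  have hL := hasSum_mul_lerch_ratio hθ hr₀ hr hpos hneg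
  simp only [appellLerch_term_eq m N _ b τ hY', ← thetaTerm_mul_lerchVar_zpow m N _ b τ,
    ← thetaTerm.eq_1]
  refine ⟨summable_norm_iff.mpr (hL.summable.mul_left _), summable_ite_pos_cone_norm hS,
    summable_ite_neg_cone_norm hS, hθ, ?_⟩
  rw [tsum_mul_left, hL.tsum_eq]
  ring
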